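/- arXiv:2409.11996 — 5 statements merged into one kernel-verified Lean document; each statement's English description precedes it below -/
import Mathlib

section
/- Let X : [0,1] → V and Y : [0,1] → W be continuously differentiable paths into finite-dimensional real vector spaces, and let X ⊠ Y : [0,1]² → V ⊗ W be the product membrane (s,t) ↦ X(s) ⊗ Y(t). Then for all k ≥ 1 and all α_i ∈ V*, β_i ∈ W*, the id-signature factorizes: ⟨σ(X ⊠ Y), (α1⊗β1) ⊗ ... ⊗ (αk⊗βk)⟩ = ⟨σ(X), α1 ⊗ ... ⊗ αk⟩ · ⟨σ(Y), β1 ⊗ ... ⊗ βk⟩. -/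
open MeasureTheory

noncomputable section

/-- The ordered simplex `0 ≤ t 0 ≤ t 1 ≤ ⋯ ≤ t (k-1) ≤ 1` in `Fin k → ℝ`. -/
def orderedSimplex (k : ℕ) : Set (Fin k → ℝ) :=
  {t | Monotone t ∧ ∀ a, t a ∈ Set.Icc (0 : ℝ) 1}

/-- Iterated-integral (path) signature entry for a family of scalar coordinate
functions `f a : ℝ → ℝ`, i.e. `⟨σ(X), e_{i₁}* ⊗ ⋯ ⊗ e_{i_k}*⟩` with `f a = X_{i_a}`. -/
def pathSig {k : ℕ} (f : Fin k → ℝ → ℝ) : ℝ :=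
  ∫ t in orderedSimplex k, ∏ a, deriv (f a) (t a)

/-- Mixed second partial derivative `∂²/∂s∂t`. -/
def d12 (f : ℝ → ℝ → ℝ) (s t : ℝ) : ℝ :=
  deriv (fun t' => deriv (fun s' => f s' t') s) t

/-- id-signature entry for a family of scalar membrane coordinate functions. -/
def memSig {k : ℕ} (f : Fin k → ℝ → ℝ → ℝ) : ℝ :=
  ∫ p in (orderedSimplex k) ×ˢ (orderedSimplex k), ∏ a, d12 (f a) (p.1 a) (p.2 a)

/-- the id-signature of a product membrane `X ⊠ Y` factorizes:
`⟨σ(X ⊠ Y), (α₁⊗β₁) ⊗ ⋯ ⊗ (α_k⊗β_k)⟩ = ⟨σ(X), α₁ ⊗ ⋯ ⊗ α_k⟩ · ⟨σ(Y), β₁ ⊗ ⋯ ⊗ β_k⟩`.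
Note `(αᵢ ⊗ βᵢ) ∘ (X ⊠ Y) (s,t) = αᵢ(X(s)) · βᵢ(Y(t))`. -/
theorem product_membrane_signature {V W : Type*}
    [NormedAddCommGroup V] [NormedSpace ℝ V] [FiniteDimensional ℝ V]
    [NormedAddCommGroup W] [NormedSpace ℝ W] [FiniteDimensional ℝ W]
    (X : ℝ → V) (Y : ℝ → W) (hX : ContDiff ℝ 1 X) (hY : ContDiff ℝ 1 Y)
    (k : ℕ) (hk : 1 ≤ k) (α : Fin k → (V →ₗ[ℝ] ℝ)) (β : Fin k → (W →ₗ[ℝ] ℝ)) :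
    memSig (fun a s t => α a (X s) * β a (Y t))
      = pathSig (fun a s => α a (X s)) * pathSig (fun a t => β a (Y t)) := by
  have key : ∀ (a : Fin k) (s t : ℝ),
      d12 (fun s t => α a (X s) * β a (Y t)) s t
        = deriv (fun s => α a (X s)) s * deriv (fun t => β a (Y t)) t := by
    intro a s t
    unfold d12
    have h1 : (fun t' => deriv (fun s' => α a (X s') * β a (Y t')) s)
        = fun t' => deriv (fun s' => α a (X s')) s * β a (Y t') := by
      funext t'
      exact deriv_mul_const_field _
    rw [h1, deriv_const_mul_field]
  unfold memSig pathSig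
  have h2 : ∀ p : (Fin k → ℝ) × (Fin k → ℝ),
      (∏ a, d12 (fun s t => α a (X s) * β a (Y t)) (p.1 a) (p.2 a))
        = (∏ a, deriv (fun s => α a (X s)) (p.1 a))
            * ∏ a, deriv (fun t => β a (Y t)) (p.2 a) := by
    intro p
    simp_rw [key, Finset.prod_mul_distrib]
  simp_rw [h2]
  rw [Measure.volume_eq_prod]
  exact setIntegral_prod_mul (μ := volume) (ν := volume)
    (fun x : Fin k → ℝ => ∏ a, deriv (fun s => α a (X s)) (x a))
    (fun y : Fin k → ℝ => ∏ a, deriv (fun t => β a (Y t)) (y a)) _ _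
end
end

section
/- Let X : [0,1] → ℝ^m and Y : [0,1] → ℝ^n be continuously differentiable paths and let kron(X,Y) : [0,1]² → ℝ^{mn} be the membrane (s,t) ↦ X(s) ⊗ Y(t) (the Kronecker product of column vectors). Then the signature matrix of the membrane equals the Kronecker product of the path signature matrices: S(kron(X,Y)) = S(X) ⊗ S(Y) as mn × mn matrices. -/
open MeasureTheory

noncomputable section

lemma d12_mul (g h : ℝ → ℝ) (s t : ℝ) :
    d12 (fun s t => g s * h t) s t = deriv g s * deriv h t := by
  unfold d12
  have : (fun t' => deriv (fun s' => g s' * h t') s) = fun t' => deriv g s * h t' := by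
    funext t'
    simp [deriv_mul_const_field]
  rw [this, deriv_const_mul_field]

open Kronecker in
/-- the signature matrix of `kron(X,Y) : (s,t) ↦ X(s) ⊗ Y(t)` is the
Kronecker product of the path signature matrices, `S(kron(X,Y)) = S(X) ⊗ S(Y)`. -/
theorem kron_membrane_signature_matrix (m n : ℕ)
    (X : ℝ → Fin m → ℝ) (Y : ℝ → Fin n → ℝ)
    (hX : ContDiff ℝ 1 X) (hY : ContDiff ℝ 1 Y) :
    (Matrix.of (fun (p q : Fin m × Fin n) =>
        memSig (fun a s t => X s ((![p, q] a).1) * Y t ((![p, q] a).2))))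
      = (Matrix.of (fun (i j : Fin m) => pathSig (fun a t => X t (![i, j] a)))) ⊗ₖ
        (Matrix.of (fun (i j : Fin n) => pathSig (fun a t => Y t (![i, j] a)))) := by
  ext p q
  simp only [Matrix.kroneckerMap_apply, Matrix.of_apply]
  unfold memSig pathSig
  have hd : ∀ (pt : (Fin 2 → ℝ) × (Fin 2 → ℝ)),
      ∏ a, d12 (fun s t => X s ((![p, q] a).1) * Y t ((![p, q] a).2)) (pt.1 a) (pt.2 a)
      = (∏ a, deriv (fun t => X t (![p.1, q.1] a)) (pt.1 a)) *
        (∏ a, deriv (fun t => Y t (![p.2, q.2] a)) (pt.2 a)) := by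
    intro pt
    rw [← Finset.prod_mul_distrib]
    refine Finset.prod_congr rfl fun a _ => ?_
    rw [d12_mul]
    fin_cases a <;> rfl
  simp only [hd]
  rw [Measure.volume_eq_prod]
  exact MeasureTheory.setIntegral_prod_mul
    (fun x : Fin 2 → ℝ => ∏ a, deriv (fun t => X t (![p.1, q.1] a)) (x a))
    (fun y : Fin 2 → ℝ => ∏ a, deriv (fun t => Y t (![p.2, q.2] a)) (y a)) _ _
end
end

section
/- For the moment path Mom^d : [0,1] → ℝ^d, t ↦ (t, t², ..., t^d), the k-th level signature satisfies σ(Mom^d)(e_{i1}* ⊗ ... ⊗ e_{ik}*) = (i2 · i3 ⋯ ik) / ((i1+i2)(i1+i2+i3) ⋯ (i1+...+ik)) for all 1 ≤ i1,...,ik ≤ d. -/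
/-!
Integrating out the first time variable, `∫₀^{t₁} (p₀ + 1) t₀^{p₀} dt₀ = t₁^{p₀+1}`, merges the
first two letters of the integrand `∏ₐ (pₐ + 1) tₐ^{pₐ}` into a single letter with exponent
`p₀ + p₁ + 1`, at the cost of the factor `(p₁ + 1) / (p₀ + p₁ + 2)`. The merged word has the
partial sums of the original one with the first dropped, so induction on the length of the word
gives `∏_{a ≥ 1} (pₐ + 1) / ∑_{b ≤ a} (p_b + 1)`. For the moment path, `pₐ + 1 = iₐ`.
-/

open MeasureTheory

noncomputable section

open Finset

theorem Fin.monotone_cons_iff {α : Type*} [Preorder α] {n : ℕ} {x : α} {y : Fin (n + 1) → α} :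
    Monotone (Fin.cons x y : Fin (n + 2) → α) ↔ x ≤ y 0 ∧ Monotone y := by
  simp [Fin.monotone_iff_le_succ (n := n + 1), Fin.monotone_iff_le_succ (n := n),
    Fin.forall_fin_succ]

theorem cons_mem_orderedSimplex_iff {n : ℕ} {x : ℝ} {y : Fin (n + 1) → ℝ} :
    (Fin.cons x y : Fin (n + 2) → ℝ) ∈ orderedSimplex (n + 2)
      ↔ y ∈ orderedSimplex (n + 1) ∧ x ∈ Set.Icc 0 (y 0) := by
  simp only [orderedSimplex, Set.mem_ofPred_eq, Fin.monotone_cons_iff]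
  rw [Fin.forall_fin_succ, Fin.cons_zero]
  simp only [Fin.cons_succ, Set.mem_Icc]
  constructor
  · rintro ⟨⟨hxy, hy⟩, ⟨hx0, -⟩, hy01⟩
    exact ⟨⟨hy, hy01⟩, hx0, hxy⟩
  · rintro ⟨⟨hy, hy01⟩, hx0, hxy⟩
    exact ⟨⟨hxy, hy⟩, ⟨hx0, hxy.trans (hy01 0).2⟩, hy01⟩

theorem orderedSimplex_eq_inter_pi (n : ℕ) :
    orderedSimplex n = {t | Monotone t} ∩ Set.univ.pi fun _ => Set.Icc 0 1 := by
  ext t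
  simp only [orderedSimplex, Set.mem_inter_iff, Set.mem_ofPred_eq, Set.mem_univ_pi]

theorem isCompact_orderedSimplex (n : ℕ) : IsCompact (orderedSimplex n) := by
  rw [orderedSimplex_eq_inter_pi]
  exact (isCompact_univ_pi fun _ => isCompact_Icc).inter_left isClosed_monotone

theorem measurableSet_orderedSimplex (n : ℕ) : MeasurableSet (orderedSimplex n) :=
  (isCompact_orderedSimplex n).isClosed.measurableSet

theorem Fin.sum_Iic_succ {M : Type*} [AddCommMonoid M] {n : ℕ} (f : Fin (n + 1) → M)
    (a : Fin n) : ∑ i ≤ a.succ, f i = f 0 + ∑ i ≤ a, f i.succ := by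
  rw [← Icc_bot, bot_eq_zero, ← Ioc_insert_left (Fin.zero_le _),
    sum_insert (by simp), ← Fin.map_succEmb_Iic, sum_map]
  rfl

theorem Fin.sum_Iic_cons_add {M : Type*} [AddCommMonoid M] {n : ℕ} (f : Fin (n + 2) → M)
    (a : Fin (n + 1)) :
    ∑ i ≤ a, (Fin.cons (f 0 + f 1) (fun i => f i.succ.succ) : Fin (n + 1) → M) i
      = ∑ i ≤ a.succ, f i := by
  cases a using Fin.cases with
  | zero =>
    rw [Fin.sum_Iic_succ, ← bot_eq_zero, Iic_bot]
    simp [bot_eq_zero]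
  | succ a => simp [Fin.sum_Iic_succ, add_assoc]

theorem integral_Icc_natCast_add_one_mul_pow {c : ℝ} (hc : 0 ≤ c) (p : ℕ) :
    ∫ x in Set.Icc 0 c, ((p + 1 : ℝ) * x ^ p) = c ^ (p + 1) := by
  rw [integral_Icc_eq_integral_Ioc, ← intervalIntegral.integral_of_le hc,
    intervalIntegral.integral_const_mul, integral_pow]
  field_simp
  simp

theorem setIntegral_orderedSimplex_one (F : (Fin 1 → ℝ) → ℝ) :
    ∫ t in orderedSimplex 1, F t = ∫ x in Set.Icc 0 1, F (fun _ => x) := by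
  have hpre : (MeasurableEquiv.funUnique (Fin 1) ℝ).symm ⁻¹' orderedSimplex 1 = Set.Icc 0 1 := by
    ext x
    simp [orderedSimplex, Subsingleton.monotone]
  rw [← hpre]
  exact (((volume_preserving_funUnique (Fin 1) ℝ).symm _).setIntegral_preimage_emb
    (MeasurableEquiv.measurableEmbedding _) F _).symm

theorem setIntegral_orderedSimplex_succ {n : ℕ} {F : (Fin (n + 2) → ℝ) → ℝ}
    (hF : IntegrableOn F (orderedSimplex (n + 2))) :
    ∫ t in orderedSimplex (n + 2), F t
      = ∫ y in orderedSimplex (n + 1), ∫ x in Set.Icc 0 (y 0), F (Fin.cons x y) := by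
  classical
  set e := (MeasurableEquiv.piFinSuccAbove (fun _ : Fin (n + 2) => ℝ) 0).symm
  have he : MeasurePreserving e (volume.prod volume) volume :=
    (volume_preserving_piFinSuccAbove (fun _ : Fin (n + 2) => ℝ) 0).symm
  have he_apply : ∀ p, e p = Fin.cons p.1 p.2 := fun p => by
    simp [e, MeasurableEquiv.piFinSuccAbove_symm_apply, Fin.insertNthEquiv, Fin.insertNth_zero']
  set T := e ⁻¹' orderedSimplex (n + 2)
  have hT : ∀ x y, (x, y) ∈ T ↔ y ∈ orderedSimplex (n + 1) ∧ x ∈ Set.Icc 0 (y 0) := fun x y => by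
    rw [Set.mem_preimage, he_apply]
    exact cons_mem_orderedSimplex_iff
  have hTmeas : MeasurableSet T := e.measurable (measurableSet_orderedSimplex _)
  have hint : Integrable (T.indicator (fun p => F (e p))) (volume.prod volume) :=
    (integrable_indicator_iff hTmeas).2
      ((he.integrableOn_comp_preimage e.measurableEmbedding).2 hF)
  have hfiber : ∀ y, ∫ x, T.indicator (fun p => F (e p)) (x, y)
      = (orderedSimplex (n + 1)).indicator
          (fun y => ∫ x in Set.Icc 0 (y 0), F (Fin.cons x y)) y := fun y => by
    by_cases hy : y ∈ orderedSimplex (n + 1)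
    · rw [Set.indicator_of_mem hy, ← integral_indicator measurableSet_Icc]
      congr 1 with x
      simp only [Set.indicator_apply, hT, hy, true_and, he_apply]
    · simp only [Set.indicator_apply, hT, hy, false_and, if_false, integral_zero]
  rw [← he.setIntegral_preimage_emb e.measurableEmbedding, ← integral_indicator hTmeas,
    integral_prod_symm _ hint]
  simp_rw [hfiber]
  exact integral_indicator (measurableSet_orderedSimplex _)

theorem setIntegral_orderedSimplex_prod_mul_pow (k : ℕ) (p : Fin (k + 1) → ℕ) :
    ∫ t in orderedSimplex (k + 1), ∏ a, ((p a + 1 : ℝ) * t a ^ p a)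
      = ∏ a : Fin k, (p a.succ + 1 : ℝ) / ∑ b ≤ a.succ, (p b + 1 : ℝ) := by
  induction k with
  | zero =>
    simp [setIntegral_orderedSimplex_one, integral_Icc_natCast_add_one_mul_pow]
  | succ k ih =>
    set m : Fin (k + 1) → ℕ := Fin.cons (p 0 + p 1 + 1) fun a => p a.succ.succ
    have hint : IntegrableOn (fun t : Fin (k + 2) → ℝ => ∏ a, ((p a + 1 : ℝ) * t a ^ p a))
        (orderedSimplex (k + 2)) :=
      (by fun_prop : Continuous _).continuousOn.integrableOn_compact (isCompact_orderedSimplex _)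
    have hinner : Set.EqOn
        (fun y => ∫ x in Set.Icc 0 (y 0),
          ∏ a, ((p a + 1 : ℝ) * (Fin.cons x y : Fin (k + 2) → ℝ) a ^ p a))
        (fun y => (p 1 + 1) / (p 0 + p 1 + 2) * ∏ a, ((m a + 1 : ℝ) * y a ^ m a))
        (orderedSimplex (k + 1)) := fun y hy => by
      simp only [Fin.prod_univ_succ (n := k + 1), Fin.cons_zero, Fin.cons_succ]
      rw [integral_mul_const, integral_Icc_natCast_add_one_mul_pow (hy.2 0).1]
      simp only [Fin.prod_univ_succ, m, Fin.cons_zero, Fin.cons_succ, Fin.succ_zero_eq_one]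
      field_simp
      push_cast
      ring
    have hsum : ∀ a : Fin (k + 1), ∑ b ≤ a, (m b + 1 : ℝ) = ∑ b ≤ a.succ, (p b + 1 : ℝ) := by
      intro a
      rw [← Fin.sum_Iic_cons_add]
      congr 1 with b
      cases b using Fin.cases <;> simp [m]
      ring
    have hsum_one : ∑ b ≤ (0 : Fin (k + 1)).succ, (p b + 1 : ℝ) = p 0 + p 1 + 2 := by
      rw [← hsum 0, ← bot_eq_zero, Iic_bot, sum_singleton, bot_eq_zero]
      simp [m]
      ring
    rw [setIntegral_orderedSimplex_succ hint, setIntegral_congr_fun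
      (measurableSet_orderedSimplex _) hinner, integral_const_mul, ih m, Fin.prod_univ_succ,
      hsum_one]
    simp only [hsum, m, Fin.cons_succ, Fin.succ_zero_eq_one]

/-- The 1-indexed letter `i_a` is `(ι a : ℕ) + 1`. -/
theorem moment_path_signature (d k : ℕ) (ι : Fin (k + 1) → Fin d) :
    pathSig (fun a t => t ^ ((ι a : ℕ) + 1))
      = (∏ a ∈ Finset.Ioi (0 : Fin (k + 1)), (((ι a : ℕ) + 1 : ℕ) : ℝ))
        / ∏ a ∈ Finset.Ioi (0 : Fin (k + 1)),
            (∑ b ∈ Finset.Iic a, (((ι b : ℕ) + 1 : ℕ) : ℝ)) := by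
  simp only [pathSig, deriv_pow_field, Nat.add_sub_cancel, Nat.cast_add, Nat.cast_one]
  rw [setIntegral_orderedSimplex_prod_mul_pow, Fin.prod_Ioi_zero, Fin.prod_Ioi_zero,
    prod_div_distrib]
end
end

section
/- Every piecewise bilinear membrane X : [0,1]² → ℝ^d of order (m,n) admits a unique decomposition X = A∘Axis^{m,n} + R, where A : ℝ^{mn} → ℝ^d is a linear map and R is a membrane each of whose coordinates is a sum of a piecewise linear function of s alone and a piecewise linear function of t alone (with respect to the uniform grids). Consequently σ(X) = σ(A∘Axis^{m,n}). -/
open MeasureTheory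

noncomputable section

/-- The `i`-th coordinate (0-indexed) of the canonical axis path of order `m`:
`0` on `[0, i/m]`, `m·s − i` on `[i/m, (i+1)/m]`, and `1` afterwards. -/
def axisCoord (m : ℕ) (i : Fin m) (s : ℝ) : ℝ :=
  max 0 (min 1 ((m : ℝ) * s - ((i : ℕ) : ℝ)))

/-- A function `ℝ → ℝ` that is affine on each interval `[i/m, (i+1)/m]` of the
uniform grid of order `m`. -/
def PWLinearGrid (m : ℕ) (f : ℝ → ℝ) : Prop :=
  ∀ i : Fin m, ∃ b c : ℝ,
    ∀ s ∈ Set.Icc (((i : ℕ) : ℝ) / m) ((((i : ℕ) : ℝ) + 1) / m), f s = b * s + c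

/-- A membrane that is biaffine on each grid rectangle
`[i/m,(i+1)/m] × [j/n,(j+1)/n]`. -/
def PWBilinear (m n d : ℕ) (X : ℝ → ℝ → Fin d → ℝ) : Prop :=
  ∀ (i : Fin m) (j : Fin n) (l : Fin d), ∃ a b c e : ℝ,
    ∀ s ∈ Set.Icc (((i : ℕ) : ℝ) / m) ((((i : ℕ) : ℝ) + 1) / m),
      ∀ t ∈ Set.Icc (((j : ℕ) : ℝ) / n) ((((j : ℕ) : ℝ) + 1) / n),
        X s t l = a * s * t + b * s + c * t + e

/-- The decomposition property `X = A ∘ Axis^{m,n} + R` on `[0,1]²`, where each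
coordinate of `R` is a sum of a piecewise linear function of `s` alone and a
piecewise linear function of `t` alone. -/
def AxisDecomp (m n d : ℕ) (X : ℝ → ℝ → Fin d → ℝ)
    (A : Matrix (Fin d) (Fin m × Fin n) ℝ) : Prop :=
  ∃ g h : Fin d → ℝ → ℝ,
    (∀ l, PWLinearGrid m (g l)) ∧ (∀ l, PWLinearGrid n (h l)) ∧
    ∀ s ∈ Set.Icc (0:ℝ) 1, ∀ t ∈ Set.Icc (0:ℝ) 1, ∀ l : Fin d,
      X s t l = (∑ p : Fin m × Fin n, A l p * (axisCoord m p.1 s * axisCoord n p.2 t))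
        + g l s + h l t

/-!
The mixed second difference of `X` over the grid cell `(i, j)` is the only possible entry
`A (i, j)`: it annihilates functions of `s` alone and of `t` alone, and picks out `a (i, j)` from
`⟨a, Axis^{m,n}⟩`. With this choice `Y = X - A ∘ Axis^{m,n}` is biaffine on every cell with
vanishing mixed difference there, so it has no `s t` term on any cell. Because neighbouring closed
cells share an edge, `Y s t - Y s 0 - Y 0 t + Y 0 0` is then constant from cell to cell, hence
zero. Off the grid lines `∂₁₂` kills functions of `s` alone and of `t` alone, so `X` and
`A ∘ Axis^{m,n}` have the same `∂₁₂` almost everywhere, hence the same id-signature.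
-/

open Set Filter Topology

def gridCell (m i : ℕ) : Set ℝ := Icc ((i : ℝ) / m) (((i : ℝ) + 1) / m)

section GridCell

variable {m : ℕ}

lemma left_mem_gridCell (i : ℕ) : (i : ℝ) / m ∈ gridCell m i :=
  ⟨le_rfl, by gcongr; linarith⟩

lemma right_mem_gridCell (i : ℕ) : ((i : ℝ) + 1) / m ∈ gridCell m i :=
  ⟨by gcongr; linarith, le_rfl⟩

lemma zero_mem_gridCell_zero : (0 : ℝ) ∈ gridCell m 0 := by
  simpa using left_mem_gridCell (m := m) 0

lemma gridCell_subset_Icc (i : Fin m) : gridCell m i ⊆ Icc 0 1 := by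
  have hm : (0 : ℝ) < m := by exact_mod_cast i.pos
  have hi : (i : ℝ) + 1 ≤ m := by exact_mod_cast i.isLt
  rintro s ⟨hs₀, hs₁⟩
  exact ⟨le_trans (by positivity) hs₀, hs₁.trans ((div_le_one hm).2 hi)⟩

lemma exists_mem_gridCell (hm : 0 < m) {s : ℝ} (hs : s ∈ Icc (0 : ℝ) 1) :
    ∃ i : Fin m, s ∈ gridCell m i := by
  have hm' : (0 : ℝ) < m := by exact_mod_cast hm
  have hms : 0 ≤ m * s := mul_nonneg hm'.le hs.1
  simp only [gridCell, mem_Icc, div_le_iff₀ hm', le_div_iff₀ hm']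
  rcases lt_or_ge ⌊m * s⌋₊ m with h | h
  · exact ⟨⟨_, h⟩, by linarith [Nat.floor_le hms], by linarith [Nat.lt_floor_add_one (m * s)]⟩
  · refine ⟨⟨m - 1, by omega⟩, ?_, ?_⟩ <;> simp only [Nat.cast_sub (by omega : 1 ≤ m)]
    · have : ((m : ℕ) : ℝ) ≤ ⌊m * s⌋₊ := by exact_mod_cast h
      push_cast
      linarith [Nat.floor_le hms]
    · push_cast
      nlinarith [hs.2]

lemma exists_gridCell_mem_nhds (hm : 0 < m) {s : ℝ} (hs : s ∈ Icc (0 : ℝ) 1)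
    (hgrid : s ∉ range fun q : ℕ => (q : ℝ) / m) : ∃ i : Fin m, gridCell m i ∈ 𝓝 s := by
  obtain ⟨i, hi₀, hi₁⟩ := exists_mem_gridCell hm hs
  refine ⟨i, Icc_mem_nhds (hi₀.lt_of_ne fun h => hgrid ⟨i, h⟩)
    (hi₁.lt_of_ne fun h => hgrid ⟨i + 1, ?_⟩)⟩
  rw [h]
  push_cast
  rfl

lemma apply_eq_apply_zero_of_gridCell (hm : 0 < m) {φ : ℝ → ℝ}
    (h : ∀ i : Fin m, ∀ x ∈ gridCell m i, ∀ y ∈ gridCell m i, φ x = φ y) :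
    ∀ s ∈ Icc (0 : ℝ) 1, φ s = φ 0 := by
  have hnode : ∀ k : ℕ, k < m → φ (k / m) = φ 0 := by
    intro k hk
    induction k with
    | zero => simp
    | succ k ih =>
      rw [← ih (by omega), Nat.cast_succ]
      exact h ⟨k, by omega⟩ _ (right_mem_gridCell k) _ (left_mem_gridCell k)
  intro s hs
  obtain ⟨i, hi⟩ := exists_mem_gridCell hm hs
  rw [← hnode i i.isLt]
  exact h i _ hi _ (left_mem_gridCell i)

end GridCell

def AffineOn (u : Set ℝ) (f : ℝ → ℝ) : Prop :=
  ∃ b c : ℝ, ∀ s ∈ u, f s = b * s + c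

def BiaffineOn (u v : Set ℝ) (f : ℝ → ℝ → ℝ) : Prop :=
  ∃ a b c e : ℝ, ∀ s ∈ u, ∀ t ∈ v, f s t = a * s * t + b * s + c * t + e

def mixedDiff (f : ℝ → ℝ → ℝ) (s₀ s₁ t₀ t₁ : ℝ) : ℝ :=
  f s₁ t₁ - f s₀ t₁ - f s₁ t₀ + f s₀ t₀

section Affine

variable {u v : Set ℝ}

lemma AffineOn.sub_const {f : ℝ → ℝ} (hf : AffineOn u f) (k : ℝ) :
    AffineOn u fun s => f s - k := by
  obtain ⟨b, c, hf⟩ := hf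
  exact ⟨b, c - k, fun s hs => by simp only [hf s hs]; ring⟩

lemma AffineOn.differentiableAt {f : ℝ → ℝ} (hf : AffineOn u f) {s : ℝ} (hu : u ∈ 𝓝 s) :
    DifferentiableAt ℝ f s := by
  obtain ⟨b, c, hf⟩ := hf
  exact ((differentiableAt_id.const_mul b).add_const c).congr_of_eventuallyEq
    (eventually_of_mem hu hf)

lemma AffineOn.biaffineOn_mul {φ ψ : ℝ → ℝ} (hφ : AffineOn u φ) (hψ : AffineOn v ψ) :
    BiaffineOn u v fun s t => φ s * ψ t := by
  obtain ⟨b, c, hφ⟩ := hφ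
  obtain ⟨b', c', hψ⟩ := hψ
  exact ⟨b * b', b * c', c * b', c * c', fun s hs t ht => by simp only [hφ s hs, hψ t ht]; ring⟩

lemma BiaffineOn.affineOn_left {f : ℝ → ℝ → ℝ} (hf : BiaffineOn u v f) {t : ℝ} (ht : t ∈ v) :
    AffineOn u fun s => f s t := by
  obtain ⟨a, b, c, e, hf⟩ := hf
  exact ⟨a * t + b, c * t + e, fun s hs => by simp only [hf s hs t ht]; ring⟩

lemma BiaffineOn.affineOn_right {f : ℝ → ℝ → ℝ} (hf : BiaffineOn u v f) {s : ℝ} (hs : s ∈ u) :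
    AffineOn v (f s) := by
  obtain ⟨a, b, c, e, hf⟩ := hf
  exact ⟨a * s + c, b * s + e, fun t ht => by simp only [hf s hs t ht]; ring⟩

lemma BiaffineOn.const_mul {f : ℝ → ℝ → ℝ} (hf : BiaffineOn u v f) (k : ℝ) :
    BiaffineOn u v fun s t => k * f s t := by
  obtain ⟨a, b, c, e, hf⟩ := hf
  exact ⟨k * a, k * b, k * c, k * e, fun s hs t ht => by simp only [hf s hs t ht]; ring⟩

lemma BiaffineOn.sub {f g : ℝ → ℝ → ℝ} (hf : BiaffineOn u v f) (hg : BiaffineOn u v g) :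
    BiaffineOn u v fun s t => f s t - g s t := by
  obtain ⟨a, b, c, e, hf⟩ := hf
  obtain ⟨a', b', c', e', hg⟩ := hg
  exact ⟨a - a', b - b', c - c', e - e', fun s hs t ht => by
    simp only [hf s hs t ht, hg s hs t ht]
    ring⟩

lemma BiaffineOn.sum {ι : Type*} [Fintype ι] {f : ι → ℝ → ℝ → ℝ}
    (hf : ∀ p, BiaffineOn u v (f p)) : BiaffineOn u v fun s t => ∑ p, f p s t := by
  choose a b c e hf using hf
  refine ⟨∑ p, a p, ∑ p, b p, ∑ p, c p, ∑ p, e p, fun s hs t ht => ?_⟩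
  simp only [hf _ s hs t ht, Finset.sum_add_distrib, Finset.sum_mul]

lemma BiaffineOn.mixedDiff_eq_zero {f : ℝ → ℝ → ℝ} (hf : BiaffineOn u v f) {s₀ s₁ t₀ t₁ : ℝ}
    (hs₀ : s₀ ∈ u) (hs₁ : s₁ ∈ u) (hs : s₀ ≠ s₁) (ht₀ : t₀ ∈ v) (ht₁ : t₁ ∈ v) (ht : t₀ ≠ t₁)
    (h₀ : mixedDiff f s₀ s₁ t₀ t₁ = 0) :
    ∀ s ∈ u, ∀ s' ∈ u, ∀ t ∈ v, ∀ t' ∈ v, mixedDiff f s s' t t' = 0 := by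
  obtain ⟨a, b, c, e, hf⟩ := hf
  have hdiff : ∀ s ∈ u, ∀ s' ∈ u, ∀ t ∈ v, ∀ t' ∈ v,
      mixedDiff f s s' t t' = a * ((s' - s) * (t' - t)) := by
    intro s hs s' hs' t ht t' ht'
    simp only [mixedDiff, hf _ hs _ ht, hf _ hs' _ ht, hf _ hs _ ht', hf _ hs' _ ht']
    ring
  have ha : a = 0 := by
    rw [hdiff _ hs₀ _ hs₁ _ ht₀ _ ht₁] at h₀
    exact (mul_eq_zero.1 h₀).resolve_right
      (mul_ne_zero (sub_ne_zero.2 hs.symm) (sub_ne_zero.2 ht.symm))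
  intro s hs s' hs' t ht t' ht'
  rw [hdiff _ hs _ hs' _ ht _ ht', ha, zero_mul]

end Affine

lemma d12_eq_of_eventually_eq_add {f F : ℝ → ℝ → ℝ} {g h : ℝ → ℝ} {s t : ℝ}
    (hfF : ∀ᶠ t' in 𝓝 t, ∀ᶠ s' in 𝓝 s, f s' t' = F s' t' + g s' + h t')
    (hF : ∀ᶠ t' in 𝓝 t, DifferentiableAt ℝ (fun s' => F s' t') s)
    (hg : DifferentiableAt ℝ g s) : d12 f s t = d12 F s t := by
  have hinner : (fun t' => deriv (fun s' => f s' t') s)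
      =ᶠ[𝓝 t] fun t' => deriv (fun s' => F s' t') s + deriv g s := by
    filter_upwards [hfF, hF] with t' hfF' hF'
    rw [Filter.EventuallyEq.deriv_eq hfF', deriv_add_const, deriv_fun_add hF' hg]
  rw [d12, hinner.deriv_eq, deriv_add_const, d12]

lemma memSig_congr_of_d12 {k : ℕ} {f f' : Fin k → ℝ → ℝ → ℝ} {S T : Set ℝ}
    (hS : S.Countable) (hT : T.Countable)
    (h : ∀ a, ∀ s ∈ Icc (0 : ℝ) 1 \ S, ∀ t ∈ Icc (0 : ℝ) 1 \ T, d12 (f a) s t = d12 (f' a) s t) :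
    memSig f = memSig f' := by
  let B : Set ((Fin k → ℝ) × (Fin k → ℝ)) :=
    (univ.pi fun _ => Icc 0 1) ×ˢ (univ.pi fun _ => Icc 0 1)
  have hB : MeasurableSet B :=
    (MeasurableSet.univ_pi fun _ => measurableSet_Icc).prod
      (MeasurableSet.univ_pi fun _ => measurableSet_Icc)
  have hsub : orderedSimplex k ×ˢ orderedSimplex k ⊆ B :=
    fun p hp => ⟨fun a _ => hp.1.2 a, fun a _ => hp.2.2 a⟩
  have hlines : ∀ᵐ p : (Fin k → ℝ) × (Fin k → ℝ), ∀ a, p.1 a ∉ S ∧ p.2 a ∉ T := by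
    refine ae_all_iff.2 fun a => ?_
    have hcoord {U : Set ℝ} (hU : U.Countable) : ∀ᵐ x : Fin k → ℝ, x a ∉ U := by
      rw [volume_pi]
      exact (Measure.tendsto_eval_ae_ae (μ := fun _ : Fin k => (volume : Measure ℝ))
        (i := a)).eventually (hU.ae_notMem volume)
    exact (Measure.quasiMeasurePreserving_fst.ae (hcoord hS)).and
      (Measure.quasiMeasurePreserving_snd.ae (hcoord hT))
  refine integral_congr_ae (ae_restrict_of_ae_restrict_of_subset hsub ?_)
  filter_upwards [ae_restrict_mem hB, ae_restrict_of_ae hlines] with p hpB hp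
  exact Finset.prod_congr rfl fun a _ =>
    h a _ ⟨hpB.1 a trivial, (hp a).1⟩ _ ⟨hpB.2 a trivial, (hp a).2⟩

def gridMixedDiff (m n : ℕ) (f : ℝ → ℝ → ℝ) (p : Fin m × Fin n) : ℝ :=
  mixedDiff f (((p.1 : ℕ) : ℝ) / m) ((((p.1 : ℕ) : ℝ) + 1) / m)
    (((p.2 : ℕ) : ℝ) / n) ((((p.2 : ℕ) : ℝ) + 1) / n)

section Separable

variable {m n : ℕ}

lemma mixedDiff_eq_zero_of_gridCell (hm : 0 < m) (hn : 0 < n) {f : ℝ → ℝ → ℝ}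
    (h : ∀ (i : Fin m) (j : Fin n), ∀ s ∈ gridCell m i, ∀ s' ∈ gridCell m i,
      ∀ t ∈ gridCell n j, ∀ t' ∈ gridCell n j, mixedDiff f s s' t t' = 0) :
    ∀ s ∈ Icc (0 : ℝ) 1, ∀ t ∈ Icc (0 : ℝ) 1, mixedDiff f 0 s 0 t = 0 := by
  have hcell : ∀ (i : Fin m), ∀ s ∈ gridCell m i, ∀ s' ∈ gridCell m i,
      ∀ t ∈ Icc (0 : ℝ) 1, mixedDiff f s s' 0 t = 0 := by
    intro i s hs s' hs' t ht
    have hconst := apply_eq_apply_zero_of_gridCell hn (φ := mixedDiff f s s' 0)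
      (fun j t₀ ht₀ t₁ ht₁ => by
        have := h i j s hs s' hs' t₁ ht₁ t₀ ht₀
        simp only [mixedDiff] at this ⊢
        linarith) t ht
    rw [hconst, mixedDiff]
    ring
  intro s hs t ht
  have hconst := apply_eq_apply_zero_of_gridCell hm (φ := fun s => mixedDiff f 0 s 0 t)
    (fun i s₀ hs₀ s₁ hs₁ => by
      have := hcell i s₁ hs₁ s₀ hs₀ t ht
      simp only [mixedDiff] at this ⊢
      linarith) s hs
  rw [hconst, mixedDiff]
  ring

lemma gridCell_left_ne_right (hm : 0 < m) (i : ℕ) : (i : ℝ) / m ≠ ((i : ℝ) + 1) / m :=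
  (div_lt_div_of_pos_right (lt_add_one _) (by exact_mod_cast hm)).ne

lemma eq_add_of_gridMixedDiff_eq_zero (hm : 0 < m) (hn : 0 < n) {f : ℝ → ℝ → ℝ}
    (hf : ∀ (i : Fin m) (j : Fin n), BiaffineOn (gridCell m i) (gridCell n j) f)
    (h₀ : gridMixedDiff m n f = 0) :
    ∀ s ∈ Icc (0 : ℝ) 1, ∀ t ∈ Icc (0 : ℝ) 1, f s t = f s 0 + f 0 t - f 0 0 := by
  intro s hs t ht
  have := mixedDiff_eq_zero_of_gridCell hm hn (fun i j => (hf i j).mixedDiff_eq_zero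
    (left_mem_gridCell _) (right_mem_gridCell _) (gridCell_left_ne_right hm _)
    (left_mem_gridCell _) (right_mem_gridCell _) (gridCell_left_ne_right hn _)
    (congrFun h₀ (i, j))) s hs t ht
  simp only [mixedDiff] at this
  linarith

end Separable

section Axis

variable {m n : ℕ}

lemma axisCoord_natCast_div (q : Fin m) (k : ℕ) :
    axisCoord m q (k / m) = if (q : ℕ) < k then 1 else 0 := by
  have hm : (m : ℝ) ≠ 0 := by exact_mod_cast q.pos.ne'
  rw [axisCoord, mul_div_cancel₀ _ hm]
  split_ifs with h
  · have : (q : ℝ) + 1 ≤ k := by exact_mod_cast h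
    rw [min_eq_left (by linarith), max_eq_right zero_le_one]
  · have : (k : ℝ) ≤ q := by exact_mod_cast not_lt.1 h
    rw [min_eq_right (by linarith), max_eq_left (by linarith)]

lemma axisCoord_succ_sub (q i : Fin m) :
    axisCoord m q (((i : ℕ) + 1) / m) - axisCoord m q ((i : ℕ) / m) = if q = i then 1 else 0 := by
  have h := axisCoord_natCast_div q ((i : ℕ) + 1)
  push_cast at h
  rw [h, axisCoord_natCast_div]
  split_ifs <;> simp_all [Fin.ext_iff] <;> omega

lemma axisCoord_affineOn (q i : Fin m) : AffineOn (gridCell m i) (axisCoord m q) := by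
  have hm : (0 : ℝ) < m := by exact_mod_cast q.pos
  have hcell : ∀ s ∈ gridCell m i, (i : ℝ) ≤ m * s ∧ m * s ≤ i + 1 := fun s ⟨h₀, h₁⟩ =>
    ⟨by rwa [div_le_iff₀' hm] at h₀, by rwa [le_div_iff₀' hm] at h₁⟩
  rcases lt_trichotomy (q : ℕ) i with h | h | h
  · have h' : (q : ℝ) + 1 ≤ i := by exact_mod_cast h
    refine ⟨0, 1, fun s hs => ?_⟩
    rw [axisCoord, min_eq_left (by linarith [hcell s hs]), max_eq_right zero_le_one]
    ring
  · refine ⟨m, -(q : ℝ), fun s hs => ?_⟩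
    have h' : (q : ℝ) = i := by exact_mod_cast h
    rw [axisCoord, h', min_eq_right (by linarith [hcell s hs]),
      max_eq_right (by linarith [hcell s hs])]
    ring
  · have h' : (i : ℝ) + 1 ≤ q := by exact_mod_cast h
    refine ⟨0, 0, fun s hs => ?_⟩
    rw [axisCoord, min_eq_right (by linarith [hcell s hs]),
      max_eq_left (by linarith [hcell s hs])]
    ring

/-- One coordinate `⟨a, Axis^{m,n}(s, t)⟩` of `A ∘ Axis^{m,n}`. -/
def axisMembrane (m n : ℕ) (a : Fin m × Fin n → ℝ) (s t : ℝ) : ℝ :=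
  ∑ p : Fin m × Fin n, a p * (axisCoord m p.1 s * axisCoord n p.2 t)

lemma biaffineOn_axisMembrane (a : Fin m × Fin n → ℝ) (i : Fin m) (j : Fin n) :
    BiaffineOn (gridCell m i) (gridCell n j) (axisMembrane m n a) :=
  BiaffineOn.sum fun p =>
    ((axisCoord_affineOn p.1 i).biaffineOn_mul (axisCoord_affineOn p.2 j)).const_mul (a p)

lemma gridMixedDiff_axisMembrane (a : Fin m × Fin n → ℝ) :
    gridMixedDiff m n (axisMembrane m n a) = a := by
  funext p
  have hsplit : gridMixedDiff m n (axisMembrane m n a) p = ∑ q : Fin m × Fin n,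
      a q * ((if q.1 = p.1 then 1 else 0) * (if q.2 = p.2 then 1 else 0)) := by
    simp only [gridMixedDiff, mixedDiff, axisMembrane, ← Finset.sum_sub_distrib,
      ← Finset.sum_add_distrib, ← axisCoord_succ_sub]
    exact Finset.sum_congr rfl fun q _ => by ring
  simp [hsplit, Fintype.sum_prod_type]

end Axis

section Decomposition

variable {m n d : ℕ} {X : ℝ → ℝ → Fin d → ℝ}

lemma gridMixedDiff_sub (f g : ℝ → ℝ → ℝ) :
    gridMixedDiff m n (fun s t => f s t - g s t) = gridMixedDiff m n f - gridMixedDiff m n g := by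
  funext p
  simp only [gridMixedDiff, mixedDiff, Pi.sub_apply]
  ring

lemma AxisDecomp.eq_gridMixedDiff {A : Matrix (Fin d) (Fin m × Fin n) ℝ}
    (hA : AxisDecomp m n d X A) : A = fun l => gridMixedDiff m n fun s t => X s t l := by
  obtain ⟨g, h, -, -, hX⟩ := hA
  funext l p
  have hs₀ := gridCell_subset_Icc p.1 (left_mem_gridCell _)
  have hs₁ := gridCell_subset_Icc p.1 (right_mem_gridCell _)
  have ht₀ := gridCell_subset_Icc p.2 (left_mem_gridCell _)
  have ht₁ := gridCell_subset_Icc p.2 (right_mem_gridCell _)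
  conv_lhs => rw [← gridMixedDiff_axisMembrane (A l)]
  simp only [gridMixedDiff, mixedDiff, hX _ hs₀ _ ht₀, hX _ hs₀ _ ht₁, hX _ hs₁ _ ht₀,
    hX _ hs₁ _ ht₁, axisMembrane]
  ring

lemma exists_axisDecomp (hm : 0 < m) (hn : 0 < n) (hX : PWBilinear m n d X) :
    AxisDecomp m n d X fun l => gridMixedDiff m n fun s t => X s t l := by
  set Y : Fin d → ℝ → ℝ → ℝ := fun l s t =>
    X s t l - axisMembrane m n (gridMixedDiff m n fun s t => X s t l) s t with hY_def
  have hY : ∀ l (i : Fin m) (j : Fin n), BiaffineOn (gridCell m i) (gridCell n j) (Y l) :=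
    fun l i j => BiaffineOn.sub (hX i j l) (biaffineOn_axisMembrane _ i j)
  have hY₀ : ∀ l, gridMixedDiff m n (Y l) = 0 := fun l => by
    rw [hY_def, gridMixedDiff_sub, gridMixedDiff_axisMembrane, sub_self]
  refine ⟨fun l s => Y l s 0, fun l t => Y l 0 t - Y l 0 0,
    fun l i => (hY l i ⟨0, hn⟩).affineOn_left zero_mem_gridCell_zero,
    fun l j => ((hY l ⟨0, hm⟩ j).affineOn_right zero_mem_gridCell_zero).sub_const _,
    fun s hs t ht l => ?_⟩
  have hsep := eq_add_of_gridMixedDiff_eq_zero hm hn (hY l) (hY₀ l) s hs t ht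
  simp only [hY_def, axisMembrane] at hsep ⊢
  linarith

lemma AxisDecomp.d12_eq {A : Matrix (Fin d) (Fin m × Fin n) ℝ} (hA : AxisDecomp m n d X A)
    (l : Fin d) {i : Fin m} {j : Fin n} {s t : ℝ}
    (hs : gridCell m i ∈ 𝓝 s) (ht : gridCell n j ∈ 𝓝 t) :
    d12 (fun s t => X s t l) s t = d12 (axisMembrane m n (A l)) s t := by
  obtain ⟨g, h, hg, -, hX⟩ := hA
  refine d12_eq_of_eventually_eq_add (g := g l) (h := h l) ?_ ?_
    (AffineOn.differentiableAt (hg l i) hs)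
  · filter_upwards [ht] with t' ht'
    filter_upwards [hs] with s' hs'
    exact hX s' (gridCell_subset_Icc i hs') t' (gridCell_subset_Icc j ht') l
  · filter_upwards [ht] with t' ht'
    exact ((biaffineOn_axisMembrane (A l) i j).affineOn_left ht').differentiableAt hs

end Decomposition

/-- every piecewise bilinear membrane of order `(m,n)` has a unique
decomposition `X = A ∘ Axis^{m,n} + R` as above, and consequently
`σ(X) = σ(A ∘ Axis^{m,n})`. -/
theorem pw_bilinear_axis_decomposition (m n d : ℕ) (hm : 0 < m) (hn : 0 < n)
    (X : ℝ → ℝ → Fin d → ℝ) (hX : PWBilinear m n d X) :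
    (∃! A : Matrix (Fin d) (Fin m × Fin n) ℝ, AxisDecomp m n d X A)
    ∧ (∀ A : Matrix (Fin d) (Fin m × Fin n) ℝ, AxisDecomp m n d X A →
        ∀ (k : ℕ) (i : Fin k → Fin d),
          memSig (fun a s t => X s t (i a))
            = memSig (fun a s t =>
                ∑ p : Fin m × Fin n,
                  A (i a) p * (axisCoord m p.1 s * axisCoord n p.2 t))) := by
  refine ⟨⟨_, exists_axisDecomp hm hn hX, fun A hA => hA.eq_gridMixedDiff⟩, fun A hA k i => ?_⟩
  refine memSig_congr_of_d12 (countable_range fun q : ℕ => (q : ℝ) / m)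
    (countable_range fun q : ℕ => (q : ℝ) / n) fun a s hs t ht => ?_
  obtain ⟨i', hs'⟩ := exists_gridCell_mem_nhds hm hs.1 hs.2
  obtain ⟨j', ht'⟩ := exists_gridCell_mem_nhds hn ht.1 ht.2
  exact hA.d12_eq (i a) hs' ht'
end
end

section
/- If C ∈ ℂ^{N×N} has skew-symmetric part of rank r, then for every skew-symmetric Y ∈ ℂ^{d×d} with rank(Y) ≤ r there is A ∈ ℂ^{d×N} with (A C Aᵀ)^sk = Y. -/
open Matrix

noncomputable section

/-- The skew-symmetric part `(X − Xᵀ)/2` of a square matrix. -/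
def skewPart {ι : Type*} [Fintype ι] (X : Matrix ι ι ℂ) : Matrix ι ι ℂ :=
  (1/2 : ℂ) • (X - Xᵀ)

section Helpers

variable {l m n o : Type*} [Fintype l] [Fintype m] [Fintype n] [Fintype o]

set_option linter.unusedSectionVars false

lemma vmv_mulVec (w : m → ℂ) (v : n → ℂ) (x : n → ℂ) :
    vecMulVec w v *ᵥ x = (v ⬝ᵥ x) • w := by
  ext i
  simp [mulVec, vecMulVec_apply, dotProduct, Finset.sum_mul, Finset.mul_sum]
  exact Finset.sum_congr rfl fun j _ => by ring

lemma vecMul_vmv (x : m → ℂ) (w : m → ℂ) (v : n → ℂ) :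
    x ᵥ* vecMulVec w v = (x ⬝ᵥ w) • v := by
  ext j
  simp [vecMul, vecMulVec_apply, dotProduct, Finset.sum_mul]
  exact Finset.sum_congr rfl fun i _ => by ring

lemma mul_vmv (M : Matrix l m ℂ) (w : m → ℂ) (v : n → ℂ) :
    M * vecMulVec w v = vecMulVec (M *ᵥ w) v := by
  ext i j
  simp [mul_apply, vecMulVec_apply, mulVec, dotProduct, Finset.sum_mul]
  exact Finset.sum_congr rfl fun k _ => by ring

lemma vmv_mul (w : m → ℂ) (v : n → ℂ) (M : Matrix n o ℂ) :
    vecMulVec w v * M = vecMulVec w (v ᵥ* M) := by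
  ext i j
  simp [mul_apply, vecMulVec_apply, vecMul, dotProduct, Finset.mul_sum]
  exact Finset.sum_congr rfl fun k _ => by ring

lemma vmv_mul_vmv (a : l → ℂ) (b : m → ℂ) (c : m → ℂ) (d : n → ℂ) :
    vecMulVec a b * vecMulVec c d = (b ⬝ᵥ c) • vecMulVec a d := by
  rw [vmv_mul, vecMul_vmv]
  ext i j
  simp [vecMulVec_apply, Pi.smul_apply, smul_eq_mul]
  ring

lemma vmv_transpose (w : m → ℂ) (v : n → ℂ) :
    (vecMulVec w v)ᵀ = vecMulVec v w := by
  ext i j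
  simp [vecMulVec_apply, transpose_apply]
  ring

lemma vmv_zero_left (v : n → ℂ) : vecMulVec (0 : m → ℂ) v = 0 := by
  ext i j; simp [vecMulVec_apply]

lemma vmv_smul_left (r : ℂ) (w : m → ℂ) (v : n → ℂ) :
    vecMulVec (r • w) v = r • vecMulVec w v := by
  ext i j; simp [vecMulVec_apply]; ring

lemma neg_vmv (w : m → ℂ) (v : n → ℂ) : -vecMulVec w v = vecMulVec (-w) v := by
  ext i j; simp [vecMulVec_apply]

lemma myrank_vmv {d' n' : ℕ} (w : Fin d' → ℂ) (v : Fin n' → ℂ) :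
    (vecMulVec w v).rank ≤ 1 := by
  rw [vecMulVec_eq (Fin 1)]
  exact le_trans (rank_mul_le_right _ _) (by simpa using (replicateRow (Fin 1) v).rank_le_card_height)

lemma myrank_add_le {d' n' : ℕ} (A B : Matrix (Fin d') (Fin n') ℂ) :
    (A + B).rank ≤ A.rank + B.rank := by
  rw [Matrix.rank, Matrix.rank, Matrix.rank, mulVecLin_add]
  have h : LinearMap.range (A.mulVecLin + B.mulVecLin) ≤
      LinearMap.range A.mulVecLin ⊔ LinearMap.range B.mulVecLin := by
    rintro x ⟨y, rfl⟩
    exact Submodule.mem_sup.mpr ⟨A.mulVecLin y, ⟨y, rfl⟩, B.mulVecLin y, ⟨y, rfl⟩, rfl⟩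
  exact le_trans (Submodule.finrank_mono h) (Submodule.finrank_add_le_finrank_add_finrank _ _)

/-- a nonzero matrix admits vectors with `u ⬝ᵥ M *ᵥ v = 1`. -/
lemma exists_dot_one {k k' : ℕ} (M : Matrix (Fin k) (Fin k') ℂ) (hM : M ≠ 0) :
    ∃ (u : Fin k → ℂ) (v : Fin k' → ℂ), u ⬝ᵥ (M *ᵥ v) = 1 := by
  have : ∃ i j, M i j ≠ 0 := by
    by_contra h
    push_neg at h
    exact hM (by ext i j; simpa using h i j)
  obtain ⟨i, j, hij⟩ := this
  refine ⟨(M i j)⁻¹ • (Pi.single i 1 : Fin k → ℂ), Pi.single j 1, ?_⟩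
  have hMv : M *ᵥ Pi.single j 1 = fun i' => M i' j := by
    ext i'
    simp [mulVec_single]
  rw [hMv]
  simp only [dotProduct, Pi.smul_apply, Pi.single_apply, smul_eq_mul, ite_mul, one_mul,
    zero_mul, mul_ite, mul_zero]
  simp [Finset.sum_ite_eq', inv_mul_cancel₀ hij]

lemma matrix_rank_zero_imp {k k' : ℕ} (M : Matrix (Fin k) (Fin k') ℂ) (h : M.rank = 0) :
    M = 0 := by
  have h2 : LinearMap.range M.mulVecLin = ⊥ := Submodule.finrank_eq_zero.mp h
  have h3 : M.mulVecLin = 0 := LinearMap.range_eq_bot.mp h2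
  ext i j
  have h4 : M *ᵥ Pi.single j 1 = 0 := by
    have := congrArg (fun f => f (Pi.single j 1)) h3
    simpa [mulVecLin_apply] using this
  have := congrArg (fun w => w i) h4
  simpa [mulVec_single] using this

lemma expand_lemma {d N : ℕ} (A' : Matrix (Fin d) (Fin N) ℂ) (E S : Matrix (Fin N) (Fin N) ℂ)
    (F : Matrix (Fin d) (Fin N) ℂ) :
    (A' * E + F) * S * (A' * E + F)ᵀ =
      A' * (E * (S * Eᵀ)) * A'ᵀ + A' * (E * (S * Fᵀ)) + F * S * Eᵀ * A'ᵀ + F * S * Fᵀ := by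
  rw [transpose_add, transpose_mul]
  simp only [Matrix.mul_add, Matrix.add_mul, Matrix.mul_assoc]
  abel

/-- kernel-based rank reduction bound -/
lemma rank_reduce {k : ℕ} (Y Y' : Matrix (Fin k) (Fin k) ℂ) (u v : Fin k → ℂ)
    (hker : ∀ x, Y *ᵥ x = 0 → Y' *ᵥ x = 0) (hu : Y' *ᵥ u = 0) (hv : Y' *ᵥ v = 0)
    (huv1 : u ⬝ᵥ (Y *ᵥ v) = 1) (hvu : v ⬝ᵥ (Y *ᵥ u) = -1)
    (huu : u ⬝ᵥ (Y *ᵥ u) = 0) (hvv : v ⬝ᵥ (Y *ᵥ v) = 0) :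
    Y'.rank + 2 ≤ Y.rank := by
  classical
  have hzero : ∀ s t : ℂ, Y *ᵥ (s • u + t • v) = 0 → s = 0 ∧ t = 0 := by
    intro s t hst
    have h1 := congrArg (fun w => u ⬝ᵥ w) hst
    have h2 := congrArg (fun w => v ⬝ᵥ w) hst
    simp [mulVec_add, mulVec_smul, dotProduct_add, dotProduct_smul, smul_eq_mul,
      huu, huv1, hvu, hvv] at h1 h2
    exact ⟨by simpa using h2, by simpa using h1⟩
  have hrange : Set.range ![u, v] = {u, v} := by
    ext x
    simp only [Set.mem_range, Fin.exists_fin_two, Matrix.cons_val_zero, Matrix.cons_val_one,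
      Matrix.head_cons, Set.mem_insert_iff, Set.mem_singleton_iff]
    tauto
  have hli : LinearIndependent ℂ ![u, v] := by
    rw [LinearIndependent.pair_iff]
    intro s t hst
    exact hzero s t (by rw [hst, mulVec_zero])
  set sp : Submodule ℂ (Fin k → ℂ) := Submodule.span ℂ {u, v} with hsp_def
  have hsp_rank : Module.finrank ℂ sp = 2 := by
    rw [hsp_def, ← hrange, finrank_span_eq_card hli]
    simp
  have hsp_le : sp ≤ LinearMap.ker Y'.mulVecLin := by
    rw [hsp_def, Submodule.span_le]
    rintro x hx
    rcases hx with rfl | rfl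
    · simpa [LinearMap.mem_ker, mulVecLin_apply] using hu
    · simpa [LinearMap.mem_ker, mulVecLin_apply] using hv
  have hker_le : LinearMap.ker Y.mulVecLin ≤ LinearMap.ker Y'.mulVecLin := by
    intro x hx
    simp only [LinearMap.mem_ker, mulVecLin_apply] at hx ⊢
    exact hker x hx
  have hinf : LinearMap.ker Y.mulVecLin ⊓ sp = ⊥ := by
    rw [eq_bot_iff]
    rintro x hx
    obtain ⟨hx1, hx2⟩ := Submodule.mem_inf.mp hx
    obtain ⟨s, t, rfl⟩ := Submodule.mem_span_pair.mp hx2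
    simp only [LinearMap.mem_ker, mulVecLin_apply] at hx1
    obtain ⟨hs, ht⟩ := hzero s t hx1
    simp [hs, ht]
  have hsum := Submodule.finrank_sup_add_finrank_inf_eq (LinearMap.ker Y.mulVecLin) sp
  rw [hinf] at hsum
  simp only [finrank_bot, add_zero] at hsum
  have hle : Module.finrank ℂ ↥(LinearMap.ker Y.mulVecLin ⊔ sp) ≤
      Module.finrank ℂ ↥(LinearMap.ker Y'.mulVecLin) :=
    Submodule.finrank_mono (sup_le hker_le hsp_le)
  have hrn : Y.rank + Module.finrank ℂ ↥(LinearMap.ker Y.mulVecLin) = k := by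
    have := LinearMap.finrank_range_add_finrank_ker Y.mulVecLin
    rwa [Module.finrank_fintype_fun_eq_card, Fintype.card_fin] at this
  have hrn' : Y'.rank + Module.finrank ℂ ↥(LinearMap.ker Y'.mulVecLin) = k := by
    have := LinearMap.finrank_range_add_finrank_ker Y'.mulVecLin
    rwa [Module.finrank_fintype_fun_eq_card, Fintype.card_fin] at this
  omega

end Helpers

/-- Key lemma: any skew-symmetric `Y` of rank at most that of skew-symmetric `S`
is of the form `A * S * Aᵀ`. -/
lemma key_lemma (ρ : ℕ) : ∀ (d N : ℕ) (Y : Matrix (Fin d) (Fin d) ℂ)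
    (S : Matrix (Fin N) (Fin N) ℂ), Yᵀ = -Y → Sᵀ = -S → Y.rank ≤ ρ → Y.rank ≤ S.rank →
    ∃ A : Matrix (Fin d) (Fin N) ℂ, A * S * Aᵀ = Y := by
  induction ρ using Nat.strong_induction_on with
  | _ ρ IH =>
  intro d N Y S hY hS hρ hle
  by_cases h0 : Y = 0
  · exact ⟨0, by simp [h0]⟩
  -- skew pairing facts
  have yswap : ∀ x y : Fin d → ℂ, x ⬝ᵥ (Y *ᵥ y) = -(y ⬝ᵥ (Y *ᵥ x)) := by
    intro x y
    calc x ⬝ᵥ (Y *ᵥ y) = (x ᵥ* Y) ⬝ᵥ y := dotProduct_mulVec _ _ _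
      _ = (Yᵀ *ᵥ x) ⬝ᵥ y := by rw [mulVec_transpose]
      _ = (-(Y *ᵥ x)) ⬝ᵥ y := by rw [hY, neg_mulVec]
      _ = -(y ⬝ᵥ (Y *ᵥ x)) := by rw [neg_dotProduct, dotProduct_comm]
  have ydiag : ∀ x : Fin d → ℂ, x ⬝ᵥ (Y *ᵥ x) = 0 := fun x =>
    add_self_eq_zero.mp (eq_neg_iff_add_eq_zero.mp (yswap x x))
  have sswap : ∀ x y : Fin N → ℂ, x ⬝ᵥ (S *ᵥ y) = -(y ⬝ᵥ (S *ᵥ x)) := by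
    intro x y
    calc x ⬝ᵥ (S *ᵥ y) = (x ᵥ* S) ⬝ᵥ y := dotProduct_mulVec _ _ _
      _ = (Sᵀ *ᵥ x) ⬝ᵥ y := by rw [mulVec_transpose]
      _ = (-(S *ᵥ x)) ⬝ᵥ y := by rw [hS, neg_mulVec]
      _ = -(y ⬝ᵥ (S *ᵥ x)) := by rw [neg_dotProduct, dotProduct_comm]
  have sdiag : ∀ x : Fin N → ℂ, x ⬝ᵥ (S *ᵥ x) = 0 := fun x =>
    add_self_eq_zero.mp (eq_neg_iff_add_eq_zero.mp (sswap x x))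
  -- pick pairing vectors
  obtain ⟨u, v, huv⟩ := exists_dot_one Y h0
  have hS0 : S ≠ 0 := by
    intro h
    rw [h, rank_zero, Nat.le_zero] at hle
    exact h0 (matrix_rank_zero_imp Y hle)
  obtain ⟨p, q, hpq⟩ := exists_dot_one S hS0
  set a : Fin d → ℂ := Y *ᵥ v with ha
  set b : Fin d → ℂ := Y *ᵥ u with hb
  set c : Fin N → ℂ := S *ᵥ q with hc
  set e : Fin N → ℂ := S *ᵥ p with he
  have h1 : u ⬝ᵥ a = 1 := huv
  have h2 : v ⬝ᵥ a = 0 := ydiag v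
  have h3 : u ⬝ᵥ b = 0 := ydiag u
  have h4 : v ⬝ᵥ b = -1 := by rw [hb, yswap v u, ← ha, h1]
  have h5 : p ⬝ᵥ c = 1 := hpq
  have h6 : q ⬝ᵥ c = 0 := sdiag q
  have h7 : p ⬝ᵥ e = 0 := sdiag p
  have h8 : q ⬝ᵥ e = -1 := by rw [he, sswap q p, ← hc, h5]
  have h1' : a ⬝ᵥ u = 1 := by rw [dotProduct_comm]; exact h1
  have h2' : a ⬝ᵥ v = 0 := by rw [dotProduct_comm]; exact h2
  have h3' : b ⬝ᵥ u = 0 := by rw [dotProduct_comm]; exact h3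
  have h4' : b ⬝ᵥ v = -1 := by rw [dotProduct_comm]; exact h4
  have h5' : c ⬝ᵥ p = 1 := by rw [dotProduct_comm]; exact h5
  have h6' : c ⬝ᵥ q = 0 := by rw [dotProduct_comm]; exact h6
  have h7' : e ⬝ᵥ p = 0 := by rw [dotProduct_comm]; exact h7
  have h8' : e ⬝ᵥ q = -1 := by rw [dotProduct_comm]; exact h8
  set Y' : Matrix (Fin d) (Fin d) ℂ := Y + vecMulVec a b - vecMulVec b a with hY'def
  set S' : Matrix (Fin N) (Fin N) ℂ := S + vecMulVec c e - vecMulVec e c with hS'def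
  set E : Matrix (Fin N) (Fin N) ℂ := 1 - vecMulVec c p + vecMulVec e q with hEdef
  set F : Matrix (Fin d) (Fin N) ℂ := vecMulVec a q + vecMulVec b p with hFdef
  -- skewness of Y' and S'
  have hY' : Y'ᵀ = -Y' := by
    rw [hY'def, transpose_sub, transpose_add, hY, vmv_transpose, vmv_transpose]
    abel
  have hS' : S'ᵀ = -S' := by
    rw [hS'def, transpose_sub, transpose_add, hS, vmv_transpose, vmv_transpose]
    abel
  -- matrix identities
  have hEt : Eᵀ = 1 - vecMulVec p c + vecMulVec q e := by
    rw [hEdef, transpose_add, transpose_sub, transpose_one, vmv_transpose, vmv_transpose]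
  have hSE : S * Eᵀ = S' := by
    rw [hEt, hS'def, mul_add, mul_sub, mul_one, mul_vmv, mul_vmv, ← hc, ← he]
    abel
  have hS'q : S' *ᵥ q = 0 := by
    rw [hS'def]
    simp only [sub_mulVec, add_mulVec, vmv_mulVec, ← hc, h8', h6']
    simp
  have hS'p : S' *ᵥ p = 0 := by
    rw [hS'def]
    simp only [sub_mulVec, add_mulVec, vmv_mulVec, ← he, h7', h5']
    simp
  have hpS' : p ᵥ* S' = 0 := by
    rw [← mulVec_transpose, hS', neg_mulVec, hS'p, neg_zero]
  have hqS' : q ᵥ* S' = 0 := by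
    rw [← mulVec_transpose, hS', neg_mulVec, hS'q, neg_zero]
  have hES' : E * S' = S' := by
    rw [hEdef, add_mul, sub_mul, one_mul, vmv_mul, vmv_mul, hpS', hqS']
    ext i j
    simp [vecMulVec_apply]
  have hESE : E * (S * Eᵀ) = S' := by rw [hSE, hES']
  have hEc : E *ᵥ c = 0 := by
    rw [hEdef]
    simp only [add_mulVec, sub_mulVec, one_mulVec, vmv_mulVec, h5, h6]
    simp
  have hEe : E *ᵥ e = 0 := by
    rw [hEdef]
    simp only [add_mulVec, sub_mulVec, one_mulVec, vmv_mulVec, h7, h8]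
    simp
  have hFt : Fᵀ = vecMulVec q a + vecMulVec p b := by
    rw [hFdef, transpose_add, vmv_transpose, vmv_transpose]
  have hSF : S * Fᵀ = vecMulVec c a + vecMulVec e b := by
    rw [hFt, Matrix.mul_add, mul_vmv, mul_vmv, ← hc, ← he]
  have hESF : E * (S * Fᵀ) = 0 := by
    rw [hSF, Matrix.mul_add, mul_vmv, mul_vmv, hEc, hEe, vmv_zero_left, vmv_zero_left, add_zero]
  have hFSE : F * S * Eᵀ = 0 := by
    have h := congrArg Matrix.transpose hESF
    rw [transpose_mul, transpose_mul, transpose_transpose, hS, transpose_zero] at h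
    rw [Matrix.mul_neg, Matrix.neg_mul] at h
    exact neg_eq_zero.mp h
  have hFSF : F * S * Fᵀ = vecMulVec b a - vecMulVec a b := by
    have hFS : F * S = -vecMulVec a c - vecMulVec b e := by
      rw [hFdef, Matrix.add_mul, vmv_mul, vmv_mul]
      have hq : q ᵥ* S = -c := by rw [← mulVec_transpose, hS, neg_mulVec, ← hc]
      have hp : p ᵥ* S = -e := by rw [← mulVec_transpose, hS, neg_mulVec, ← he]
      rw [hq, hp]
      ext i j
      simp [vecMulVec_apply]
      ring
    rw [hFS, hFt]
    simp only [Matrix.sub_mul, Matrix.neg_mul, Matrix.mul_add, vmv_mul_vmv, h6', h5', h8', h7']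
    simp only [one_smul, zero_smul, neg_one_smul]
    abel
  -- rank facts
  have hSrank : S.rank ≤ S'.rank + 2 := by
    have hSeq : S = S' + (vecMulVec e c + -vecMulVec c e) := by rw [hS'def]; abel
    calc S.rank = (S' + (vecMulVec e c + -vecMulVec c e)).rank := by rw [← hSeq]
      _ ≤ S'.rank + (vecMulVec e c + -vecMulVec c e).rank := myrank_add_le _ _
      _ ≤ S'.rank + ((vecMulVec e c).rank + (-vecMulVec c e).rank) := by
          exact Nat.add_le_add_left (myrank_add_le _ _) _
      _ ≤ S'.rank + (1 + 1) := by
          refine Nat.add_le_add_left (Nat.add_le_add (myrank_vmv _ _) ?_) _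
          rw [neg_vmv]
          exact myrank_vmv _ _
  have hY'u : Y' *ᵥ u = 0 := by
    rw [hY'def]
    simp only [sub_mulVec, add_mulVec, vmv_mulVec, ← hb, h3', h1']
    simp
  have hY'v : Y' *ᵥ v = 0 := by
    rw [hY'def]
    simp only [sub_mulVec, add_mulVec, vmv_mulVec, ← ha, h4', h2']
    simp
  have hYrank : Y'.rank + 2 ≤ Y.rank := by
    refine rank_reduce Y Y' u v ?_ hY'u hY'v huv (by rw [← hb] at *; exact h4) (ydiag u) (ydiag v)
    intro x hx
    have hbx : b ⬝ᵥ x = 0 := by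
      rw [dotProduct_comm, hb, yswap x u, ← neg_eq_zero]
      simp only [neg_neg]
      rw [hx]
      simp
    have hax : a ⬝ᵥ x = 0 := by
      rw [dotProduct_comm, ha, yswap x v, ← neg_eq_zero]
      simp only [neg_neg]
      rw [hx]
      simp
    rw [hY'def, sub_mulVec, add_mulVec, vmv_mulVec, vmv_mulVec, hx, hbx, hax]
    simp
  -- apply induction hypothesis
  have hY'S' : Y'.rank ≤ S'.rank := by omega
  have hlt : Y'.rank < ρ := by omega
  obtain ⟨A', hA'⟩ := IH Y'.rank hlt d N Y' S' hY' hS' le_rfl hY'S'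
  refine ⟨A' * E + F, ?_⟩
  rw [expand_lemma, hESE, hESF, hFSE, hFSF]
  rw [Matrix.mul_zero, Matrix.zero_mul, add_zero, add_zero]
  rw [hA', hY'def]
  abel

/-- if `C ∈ ℂ^{N×N}` has skew-symmetric part of rank `r`, then every
skew-symmetric `Y ∈ ℂ^{d×d}` with `rank Y ≤ r` is realized as the skew-symmetric
part of a point `A C Aᵀ` of the congruence orbit of `C`. -/
theorem skew_part_realization (N d r : ℕ)
    (C : Matrix (Fin N) (Fin N) ℂ) (hC : (skewPart C).rank = r)
    (Y : Matrix (Fin d) (Fin d) ℂ) (hY : Yᵀ = -Y) (hrk : Y.rank ≤ r) :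
    ∃ A : Matrix (Fin d) (Fin N) ℂ, skewPart (A * C * Aᵀ) = Y := by
  have hS : (skewPart C)ᵀ = -(skewPart C) := by
    rw [skewPart, transpose_smul, transpose_sub, transpose_transpose]
    rw [← smul_neg, neg_sub]
  have hle : Y.rank ≤ (skewPart C).rank := by rw [hC]; exact hrk
  obtain ⟨A, hA⟩ := key_lemma Y.rank d N Y (skewPart C) hY hS le_rfl hle
  refine ⟨A, ?_⟩
  have : skewPart (A * C * Aᵀ) = A * skewPart C * Aᵀ := by
    rw [skewPart, skewPart, transpose_mul, transpose_mul, transpose_transpose,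
      Matrix.mul_smul, Matrix.smul_mul]
    congr 1
    simp only [Matrix.mul_sub, Matrix.sub_mul, Matrix.mul_assoc]
  rw [this, hA]
end
end
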